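/- (+2 flow in SU(N) is the complex vector mKdV equation; part of Theorem 3.) Let N ≥ 2 and κ := √(2N/(N−1)). Let v : ℝ² → ℂ^{N−1} be a smooth row-vector-valued function of (t,x) and define the su(N)-valued maps e_x := (iκ/N)·diag(1−N,1,…,1) (constant), ω_x := [[0, v],[−v†, 0]], e_t := κ·i times the matrix with (1,1) entry −|v|², remaining first row ∂_x v, remaining first column the transpose of ∂_x v̄, and lower-right block v̄⊗v, and ω_t := [[−iθ, ϖ],[−ϖ†, Θ]] with ϖ := ∂_x² v + 2|v|²·v, Θ := v̄⊗(∂_x v) − (∂_x v̄)⊗v, θ := i·((∂_x v̄)·v − v̄·(∂_x v)). Then the pair of Cartan structure equations, namely zero torsion ∂_x e_t − ∂_t e_x + [ω_x, e_t] − [ω_t, e_x] = 0 and constant curvature ∂_x ω_t − ∂_t ω_x + [ω_x, ω_t] = −[e_x, e_t], holds at every point of ℝ² if and only if v satisfies the U(N−1)-invariant complex vector mKdV equation ∂_t v = ∂_x³ v + 3|v|²·∂_x v + 3((∂_x v)·v̄)·v + κ²·∂_x v. -/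

import Mathlib

open Matrix

noncomputable section

/-- Index type for N×N matrices, N = n+1, split as first index ⊕ the rest. -/
abbrev Idx (n : ℕ) := Fin 1 ⊕ Fin n

/-- Block matrix [[z, p],[q, M]]. -/
def blk {n : ℕ} (z : ℂ) (p q : Fin n → ℂ) (M : Matrix (Fin n) (Fin n) ℂ) :
    Matrix (Idx n) (Idx n) ℂ :=
  Matrix.fromBlocks (Matrix.of fun _ _ => z) (Matrix.of fun _ j => p j)
    (Matrix.of fun i _ => q i) M

/-- Componentwise complex conjugate of a row vector. -/
def cvec {n : ℕ} (p : Fin n → ℂ) : Fin n → ℂ := fun j => starRingEnd ℂ (p j)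

/-- Outer product (p⊗q)_{jk} = p_j·q_k. -/
def outer {n : ℕ} (p q : Fin n → ℂ) : Matrix (Fin n) (Fin n) ℂ :=
  Matrix.of fun j k => p j * q k

/-- Dot product p·q = Σ_j p_j q_j. -/
def dotv {n : ℕ} (p q : Fin n → ℂ) : ℂ := ∑ j, p j * q j

/-- Contraction (p⌟M)_k = Σ_j p_j M_{jk}. -/
def contr {n : ℕ} (p : Fin n → ℂ) (M : Matrix (Fin n) (Fin n) ℂ) : Fin n → ℂ :=
  fun k => ∑ j, p j * M j k

/-- Entrywise ∂_x of a matrix-valued function of (t,x). -/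
def dxM {m : Type*} (f : ℝ → ℝ → Matrix m m ℂ) (t x : ℝ) : Matrix m m ℂ :=
  Matrix.of fun i j => deriv (fun y => f t y i j) x

/-- Entrywise ∂_t of a matrix-valued function of (t,x). -/
def dtM {m : Type*} (f : ℝ → ℝ → Matrix m m ℂ) (t x : ℝ) : Matrix m m ℂ :=
  Matrix.of fun i j => deriv (fun s => f s x i j) t

/-- Componentwise ∂_x of a row-vector-valued function of (t,x). -/
def dxV {n : ℕ} (f : ℝ → ℝ → Fin n → ℂ) (t x : ℝ) : Fin n → ℂ :=
  fun j => deriv (fun y => f t y j) x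

/-- Componentwise ∂_t of a row-vector-valued function of (t,x). -/
def dtV {n : ℕ} (f : ℝ → ℝ → Fin n → ℂ) (t x : ℝ) : Fin n → ℂ :=
  fun j => deriv (fun s => f s x j) t

section Aux
variable {n : ℕ}

@[simp] lemma blk11 (z : ℂ) (p q : Fin n → ℂ) (M) (i i' : Fin 1) :
    blk z p q M (Sum.inl i) (Sum.inl i') = z := rfl
@[simp] lemma blk12 (z : ℂ) (p q : Fin n → ℂ) (M) (i : Fin 1) (k : Fin n) :
    blk z p q M (Sum.inl i) (Sum.inr k) = p k := rfl
@[simp] lemma blk21 (z : ℂ) (p q : Fin n → ℂ) (M) (j : Fin n) (i : Fin 1) :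
    blk z p q M (Sum.inr j) (Sum.inl i) = q j := rfl
@[simp] lemma blk22 (z : ℂ) (p q : Fin n → ℂ) (M) (j k : Fin n) :
    blk z p q M (Sum.inr j) (Sum.inr k) = M j k := rfl

lemma sum_pull {n : ℕ} (c d : ℂ) (f : Fin n → ℂ) :
    (∑ j, c * f j * d) = c * (∑ j, f j) * d := by
  calc ∑ j, c * f j * d = ∑ j, c * (f j * d) := by simp [mul_assoc]
    _ = c * ∑ j, f j * d := (Finset.mul_sum _ _ _).symm
    _ = c * ((∑ j, f j) * d) := by rw [Finset.sum_mul]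
    _ = c * (∑ j, f j) * d := (mul_assoc _ _ _).symm

lemma mulIdx (A B : Matrix (Idx n) (Idx n) ℂ) (a b : Idx n) :
    (A * B) a b = A a (Sum.inl 0) * B (Sum.inl 0) b
      + ∑ j, A a (Sum.inr j) * B (Sum.inr j) b := by
  rw [Matrix.mul_apply, Fintype.sum_sum_type, Fin.sum_univ_one]

end Aux

/-- for the +2 flow data in SU(N), the pair of Cartan structure
equations (zero torsion and constant curvature) holds if and only if v satisfies
the U(N−1)-invariant complex vector mKdV equation
∂_t v = ∂_x³ v + 3|v|²·∂_x v + 3((∂_x v)·v̄)·v + κ²·∂_x v. -/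
theorem statement14 (n : ℕ) (hn : 1 ≤ n) (κ : ℝ)
    (hκ : κ = Real.sqrt (2 * ((n : ℝ) + 1) / n))
    (v : ℝ → ℝ → Fin n → ℂ)
    (hv : ∀ j, ContDiff ℝ (⊤ : ℕ∞) fun q : ℝ × ℝ => v q.1 q.2 j)
    (ex : Matrix (Idx n) (Idx n) ℂ)
    (hex : ex = (Complex.I * (κ : ℂ) / ((n : ℂ) + 1)) • blk (1 - ((n : ℂ) + 1)) 0 0 1)
    (ωx et ωt : ℝ → ℝ → Matrix (Idx n) (Idx n) ℂ)
    (hωx : ∀ t x, ωx t x = blk 0 (v t x) (fun j => -(starRingEnd ℂ (v t x j))) 0)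
    (het : ∀ t x, et t x = ((κ : ℂ) * Complex.I) •
      blk (-(dotv (v t x) (cvec (v t x)))) (dxV v t x)
        (fun j => starRingEnd ℂ (dxV v t x j)) (outer (cvec (v t x)) (v t x)))
    (ϖ : ℝ → ℝ → Fin n → ℂ)
    (hϖdef : ∀ t x j, ϖ t x j = deriv (fun y => dxV v t y j) x
        + 2 * dotv (v t x) (cvec (v t x)) * v t x j)
    (Θ : ℝ → ℝ → Matrix (Fin n) (Fin n) ℂ)
    (hΘdef : ∀ t x, Θ t x = outer (cvec (v t x)) (dxV v t x)
        - outer (cvec (dxV v t x)) (v t x))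
    (θf : ℝ → ℝ → ℂ)
    (hθdef : ∀ t x, θf t x = Complex.I *
        (dotv (cvec (dxV v t x)) (v t x) - dotv (cvec (v t x)) (dxV v t x)))
    (hωt : ∀ t x, ωt t x = blk (-Complex.I * θf t x) (ϖ t x)
        (fun j => -(starRingEnd ℂ (ϖ t x j))) (Θ t x)) :
    ((∀ t x, dxM et t x - dtM (fun _ _ => ex) t x
        + (ωx t x * et t x - et t x * ωx t x)
        - (ωt t x * ex - ex * ωt t x) = 0) ∧
     (∀ t x, dxM ωt t x - dtM ωx t x
        + (ωx t x * ωt t x - ωt t x * ωx t x)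
        = -(ex * et t x - et t x * ex)))
    ↔ (∀ t x j, dtV v t x j
        = deriv (fun y => deriv (fun y2 => dxV v t y2 j) y) x
          + 3 * dotv (v t x) (cvec (v t x)) * dxV v t x j
          + 3 * dotv (dxV v t x) (cvec (v t x)) * v t x j
          + (κ : ℂ) ^ 2 * dxV v t x j) := by
  -- smoothness toolkit
  have hC : ∀ t j, ContDiff ℝ (↑(⊤:ℕ∞)) fun y => v t y j := fun t j =>
    ((hv j).comp (contDiff_const.prodMk contDiff_id)).of_le (by simp)
  have hCt : ∀ x j, ContDiff ℝ (↑(⊤:ℕ∞)) fun s => v s x j := fun x j =>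
    ((hv j).comp (contDiff_id.prodMk contDiff_const)).of_le (by simp)
  have hC1 : ∀ t j, ContDiff ℝ (↑(⊤:ℕ∞)) fun y => dxV v t y j := fun t j =>
    (contDiff_infty_iff_deriv.mp (hC t j)).2
  have hC2 : ∀ t j, ContDiff ℝ (↑(⊤:ℕ∞)) fun y => deriv (fun z => dxV v t z j) y := fun t j =>
    (contDiff_infty_iff_deriv.mp (hC1 t j)).2
  have h1top : (↑(⊤:ℕ∞) : WithTop ℕ∞) ≠ 0 := by simp
  have HV : ∀ t x j, HasDerivAt (fun y => v t y j) (dxV v t x j) x := fun t x j =>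
    ((hC t j).differentiable h1top x).hasDerivAt
  have HVx : ∀ t x j, HasDerivAt (fun y => dxV v t y j)
      (deriv (fun z => dxV v t z j) x) x := fun t x j =>
    ((hC1 t j).differentiable h1top x).hasDerivAt
  have HVxx : ∀ t x j, HasDerivAt (fun y => deriv (fun z => dxV v t z j) y)
      (deriv (fun y => deriv (fun z => dxV v t z j) y) x) x := fun t x j =>
    ((hC2 t j).differentiable h1top x).hasDerivAt
  have HT : ∀ t x j, HasDerivAt (fun s => v s x j) (dtV v t x j) t := fun t x j =>
    ((hCt x j).differentiable h1top t).hasDerivAt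

  -- entry derivative values
  have Det11 : ∀ t x (i i' : Fin 1), deriv (fun y => et t y (Sum.inl i) (Sum.inl i')) x
      = (κ:ℂ) * Complex.I *
        -(∑ j, (dxV v t x j * starRingEnd ℂ (v t x j)
          + v t x j * starRingEnd ℂ (dxV v t x j))) := by
    intro t x i i'
    have hfun : (fun y => et t y (Sum.inl i) (Sum.inl i'))
        = fun y => (κ:ℂ) * Complex.I * -(∑ j, v t y j * starRingEnd ℂ (v t y j)) := by
      funext y; rw [het]
      simp [dotv, cvec, Matrix.smul_apply, smul_eq_mul]
    rw [hfun]
    simp only [starRingEnd_apply]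
    exact (((HasDerivAt.fun_sum (fun j _ => (HV t x j).mul (HV t x j).star)).neg).const_mul _).deriv
  have Det12 : ∀ t x (i : Fin 1) k, deriv (fun y => et t y (Sum.inl i) (Sum.inr k)) x
      = (κ:ℂ) * Complex.I * deriv (fun z => dxV v t z k) x := by
    intro t x i k
    have hfun : (fun y => et t y (Sum.inl i) (Sum.inr k))
        = fun y => (κ:ℂ) * Complex.I * dxV v t y k := by
      funext y; rw [het]; simp [Matrix.smul_apply, smul_eq_mul]
    rw [hfun]
    exact ((HVx t x k).const_mul _).deriv
  have Det21 : ∀ t x j (i : Fin 1), deriv (fun y => et t y (Sum.inr j) (Sum.inl i)) x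
      = (κ:ℂ) * Complex.I * starRingEnd ℂ (deriv (fun z => dxV v t z j) x) := by
    intro t x j i
    have hfun : (fun y => et t y (Sum.inr j) (Sum.inl i))
        = fun y => (κ:ℂ) * Complex.I * starRingEnd ℂ (dxV v t y j) := by
      funext y; rw [het]; simp [Matrix.smul_apply, smul_eq_mul]
    rw [hfun]
    simp only [starRingEnd_apply]
    exact (((HVx t x j).star).const_mul _).deriv
  have Det22 : ∀ t x j k, deriv (fun y => et t y (Sum.inr j) (Sum.inr k)) x
      = (κ:ℂ) * Complex.I *
        (starRingEnd ℂ (dxV v t x j) * v t x k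
          + starRingEnd ℂ (v t x j) * dxV v t x k) := by
    intro t x j k
    have hfun : (fun y => et t y (Sum.inr j) (Sum.inr k))
        = fun y => (κ:ℂ) * Complex.I * (starRingEnd ℂ (v t y j) * v t y k) := by
      funext y; rw [het]; simp [outer, cvec, Matrix.smul_apply, smul_eq_mul]
    rw [hfun]
    simp only [starRingEnd_apply]
    exact (((HV t x j).star.mul (HV t x k)).const_mul _).deriv
  have Dωt11 : ∀ t x (i i' : Fin 1), deriv (fun y => ωt t y (Sum.inl i) (Sum.inl i')) x
      = -Complex.I * (Complex.I *
        ((∑ j, (starRingEnd ℂ (deriv (fun z => dxV v t z j) x) * v t x j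
            + starRingEnd ℂ (dxV v t x j) * dxV v t x j))
         - ∑ j, (starRingEnd ℂ (dxV v t x j) * dxV v t x j
            + starRingEnd ℂ (v t x j) * deriv (fun z => dxV v t z j) x))) := by
    intro t x i i'
    have hfun : (fun y => ωt t y (Sum.inl i) (Sum.inl i'))
        = fun y => -Complex.I * (Complex.I *
          ((∑ j, starRingEnd ℂ (dxV v t y j) * v t y j)
            - ∑ j, starRingEnd ℂ (v t y j) * dxV v t y j)) := by
      funext y; rw [hωt]; simp [hθdef, dotv, cvec, mul_assoc]
    rw [hfun]
    simp only [starRingEnd_apply]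
    exact ((((HasDerivAt.fun_sum (fun j _ => ((HVx t x j).star).mul (HV t x j))).sub
      (HasDerivAt.fun_sum (fun j _ => ((HV t x j).star).mul (HVx t x j)))).const_mul
        Complex.I).const_mul (-Complex.I)).deriv
  have Dωt12 : ∀ t x (i : Fin 1) k, deriv (fun y => ωt t y (Sum.inl i) (Sum.inr k)) x
      = deriv (fun y => deriv (fun z => dxV v t z k) y) x
        + 2 * ((∑ j, (dxV v t x j * starRingEnd ℂ (v t x j)
            + v t x j * starRingEnd ℂ (dxV v t x j))) * v t x k
          + (∑ j, v t x j * starRingEnd ℂ (v t x j)) * dxV v t x k) := by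
    intro t x i k
    have hfun : (fun y => ωt t y (Sum.inl i) (Sum.inr k))
        = fun y => deriv (fun z => dxV v t z k) y
          + 2 * ((∑ j, v t y j * starRingEnd ℂ (v t y j)) * v t y k) := by
      funext y; rw [hωt]; simp only [blk12]; rw [hϖdef]
      simp [dotv, cvec, mul_assoc]
    rw [hfun]
    simp only [starRingEnd_apply]
    exact ((HVxx t x k).add (((HasDerivAt.fun_sum (fun j _ =>
      (HV t x j).mul (HV t x j).star)).mul (HV t x k)).const_mul 2)).deriv
  have Dωt21 : ∀ t x j (i : Fin 1), deriv (fun y => ωt t y (Sum.inr j) (Sum.inl i)) x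
      = -starRingEnd ℂ (deriv (fun y => deriv (fun z => dxV v t z j) y) x
        + 2 * ((∑ l, (dxV v t x l * starRingEnd ℂ (v t x l)
            + v t x l * starRingEnd ℂ (dxV v t x l))) * v t x j
          + (∑ l, v t x l * starRingEnd ℂ (v t x l)) * dxV v t x j)) := by
    intro t x j i
    have hfun : (fun y => ωt t y (Sum.inr j) (Sum.inl i))
        = fun y => -starRingEnd ℂ (deriv (fun z => dxV v t z j) y
          + 2 * ((∑ l, v t y l * starRingEnd ℂ (v t y l)) * v t y j)) := by
      funext y; rw [hωt]; simp only [blk21]; rw [hϖdef]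
      simp [dotv, cvec, mul_assoc]
    rw [hfun]
    simp only [starRingEnd_apply]
    exact (((HVxx t x j).add (((HasDerivAt.fun_sum (fun l _ =>
      (HV t x l).mul (HV t x l).star)).mul (HV t x j)).const_mul 2)).star.neg).deriv
  have Dωt22 : ∀ t x j k, deriv (fun y => ωt t y (Sum.inr j) (Sum.inr k)) x
      = (starRingEnd ℂ (dxV v t x j) * dxV v t x k
          + starRingEnd ℂ (v t x j) * deriv (fun z => dxV v t z k) x)
        - (starRingEnd ℂ (deriv (fun z => dxV v t z j) x) * v t x k
          + starRingEnd ℂ (dxV v t x j) * dxV v t x k) := by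
    intro t x j k
    have hfun : (fun y => ωt t y (Sum.inr j) (Sum.inr k))
        = fun y => starRingEnd ℂ (v t y j) * dxV v t y k
          - starRingEnd ℂ (dxV v t y j) * v t y k := by
      funext y; rw [hωt]; simp only [blk22]; rw [hΘdef]
      simp [outer, cvec]
    rw [hfun]
    simp only [starRingEnd_apply]
    exact (((HV t x j).star.mul (HVx t x k)).sub ((HVx t x j).star.mul (HV t x k))).deriv
  have Dωx11 : ∀ t x (i i' : Fin 1), deriv (fun s => ωx s x (Sum.inl i) (Sum.inl i')) t = 0 := by
    intro t x i i'
    have hfun : (fun s => ωx s x (Sum.inl i) (Sum.inl i')) = fun _ => (0:ℂ) := by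
      funext s; rw [hωx]; simp
    rw [hfun, deriv_const]
  have Dωx12 : ∀ t x (i : Fin 1) k, deriv (fun s => ωx s x (Sum.inl i) (Sum.inr k)) t
      = dtV v t x k := by
    intro t x i k
    have hfun : (fun s => ωx s x (Sum.inl i) (Sum.inr k)) = fun s => v s x k := by
      funext s; rw [hωx]; simp
    rw [hfun]; rfl
  have Dωx21 : ∀ t x j (i : Fin 1), deriv (fun s => ωx s x (Sum.inr j) (Sum.inl i)) t
      = -starRingEnd ℂ (dtV v t x j) := by
    intro t x j i
    have hfun : (fun s => ωx s x (Sum.inr j) (Sum.inl i))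
        = fun s => -starRingEnd ℂ (v s x j) := by
      funext s; rw [hωx]; simp
    rw [hfun]
    simp only [starRingEnd_apply]
    exact ((HT t x j).star.neg).deriv
  have Dωx22 : ∀ t x j k, deriv (fun s => ωx s x (Sum.inr j) (Sum.inr k)) t = 0 := by
    intro t x j k
    have hfun : (fun s => ωx s x (Sum.inr j) (Sum.inr k)) = fun _ => (0:ℂ) := by
      funext s; rw [hωx]; simp
    rw [hfun, deriv_const]
  have hne : ((n:ℂ)+1) ≠ 0 := by
    have := Nat.cast_add_one_ne_zero (R := ℂ) n
    push_cast at this ⊢; exact this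
  have torsion : ∀ t x, dxM et t x - dtM (fun _ _ => ex) t x
      + (ωx t x * et t x - et t x * ωx t x)
      - (ωt t x * ex - ex * ωt t x) = 0 := by
    intro t x
    ext a b
    match a, b with
    | Sum.inl i, Sum.inl i' =>
      simp only [Matrix.sub_apply, Matrix.add_apply, Matrix.zero_apply, dxM, dtM,
        Matrix.of_apply, mulIdx, deriv_const]
      rw [Det11 t x i i']
      rw [hex, hωx t x, het t x, hωt t x]
      simp only [blk11, blk12, blk21, blk22, Matrix.smul_apply, smul_eq_mul,
        Matrix.one_apply, Matrix.zero_apply, Pi.zero_apply, dotv, cvec, outer,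
        Matrix.of_apply, mul_zero, zero_mul, mul_one, one_mul, neg_zero, neg_neg,
        Finset.sum_const_zero, add_zero, zero_add, mul_neg, neg_mul]
      simp only [Finset.mul_sum, Finset.sum_mul, Finset.sum_add_distrib,
        Finset.sum_sub_distrib, mul_add, add_mul, mul_sub, sub_mul, neg_mul, mul_neg,
        neg_neg, Finset.sum_neg_distrib, mul_comm, mul_left_comm, mul_assoc]
      ring_nf
      rw [neg_add_eq_sub, sub_eq_zero]
      exact Finset.sum_congr rfl fun j _ => by ring
    | Sum.inl i, Sum.inr k =>
      simp only [Matrix.sub_apply, Matrix.add_apply, Matrix.zero_apply, dxM, dtM,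
        Matrix.of_apply, mulIdx, deriv_const]
      rw [Det12 t x i k]
      rw [hex, hωx t x, het t x, hωt t x]
      simp only [blk11, blk12, blk21, blk22, Matrix.smul_apply, smul_eq_mul,
        Matrix.one_apply, Matrix.zero_apply, Pi.zero_apply, dotv, cvec, outer,
        Matrix.of_apply, mul_zero, zero_mul, mul_one, one_mul, neg_zero, neg_neg,
        Finset.sum_const_zero, add_zero, zero_add, mul_neg, neg_mul, mul_ite, ite_mul,
        Finset.sum_ite_eq', Finset.sum_ite_eq, Finset.mem_univ, if_true]
      rw [hϖdef t x k]
      simp only [dotv, cvec]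
      have hpull : (∑ x_1, v t x x_1 * ((κ:ℂ) * Complex.I * (starRingEnd ℂ (v t x x_1) * v t x k)))
          = (κ:ℂ) * Complex.I * (∑ j, v t x j * starRingEnd ℂ (v t x j)) * v t x k := by
        rw [← sum_pull]; exact Finset.sum_congr rfl fun j _ => by ring
      rw [hpull]
      field_simp
      ring
    | Sum.inr j, Sum.inl i =>
      simp only [Matrix.sub_apply, Matrix.add_apply, Matrix.zero_apply, dxM, dtM,
        Matrix.of_apply, mulIdx, deriv_const]
      rw [Det21 t x j i]
      rw [hex, hωx t x, het t x, hωt t x]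
      simp only [blk11, blk12, blk21, blk22, Matrix.smul_apply, smul_eq_mul,
        Matrix.one_apply, Matrix.zero_apply, Pi.zero_apply, dotv, cvec, outer,
        Matrix.of_apply, mul_zero, zero_mul, mul_one, one_mul, neg_zero, neg_neg,
        Finset.sum_const_zero, add_zero, zero_add, mul_neg, neg_mul, mul_ite, ite_mul,
        Finset.sum_ite_eq', Finset.sum_ite_eq, Finset.mem_univ, if_true,
        Finset.sum_neg_distrib, neg_zero]
      rw [hϖdef t x j]
      simp only [dotv, cvec, map_add, _root_.map_mul, map_sum, Complex.conj_conj, map_ofNat]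
      have hp : (∑ x_1, (κ:ℂ) * Complex.I * (starRingEnd ℂ (v t x j) * v t x x_1)
          * starRingEnd ℂ (v t x x_1))
          = ((κ:ℂ) * Complex.I * starRingEnd ℂ (v t x j))
            * ∑ l, v t x l * starRingEnd ℂ (v t x l) :=
        calc (∑ x_1, (κ:ℂ) * Complex.I * (starRingEnd ℂ (v t x j) * v t x x_1)
            * starRingEnd ℂ (v t x x_1))
            = ∑ x_1, ((κ:ℂ) * Complex.I * starRingEnd ℂ (v t x j))
              * (v t x x_1 * starRingEnd ℂ (v t x x_1)) :=
              Finset.sum_congr rfl fun l _ => by ring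
          _ = _ := (Finset.mul_sum _ _ _).symm
      have hRR : (∑ l, starRingEnd ℂ (v t x l) * v t x l)
          = ∑ l, v t x l * starRingEnd ℂ (v t x l) :=
        Finset.sum_congr rfl fun l _ => by ring
      rw [hp, hRR]
      field_simp
      ring
    | Sum.inr j, Sum.inr k =>
      simp only [Matrix.sub_apply, Matrix.add_apply, Matrix.zero_apply, dxM, dtM,
        Matrix.of_apply, mulIdx, deriv_const]
      rw [Det22 t x j k]
      rw [hex, hωx t x, het t x, hωt t x]
      simp only [blk11, blk12, blk21, blk22, Matrix.smul_apply, smul_eq_mul,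
        Matrix.one_apply, Matrix.zero_apply, Pi.zero_apply, dotv, cvec, outer,
        Matrix.of_apply, mul_zero, zero_mul, mul_one, one_mul, neg_zero, neg_neg,
        Finset.sum_const_zero, add_zero, zero_add, mul_neg, neg_mul, mul_ite, ite_mul,
        Finset.sum_ite_eq', Finset.sum_ite_eq, Finset.mem_univ, if_true]
      ring
  have key : ∀ t x k, (dxM ωt t x - dtM ωx t x + (ωx t x * ωt t x - ωt t x * ωx t x)
      + (ex * et t x - et t x * ex)) (Sum.inl 0) (Sum.inr k)
      = (deriv (fun y => deriv (fun y2 => dxV v t y2 k) y) x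
          + 3 * dotv (v t x) (cvec (v t x)) * dxV v t x k
          + 3 * dotv (dxV v t x) (cvec (v t x)) * v t x k
          + (κ:ℂ)^2 * dxV v t x k) - dtV v t x k := by
    intro t x k
    simp only [Matrix.sub_apply, Matrix.add_apply, dxM, dtM, Matrix.of_apply, mulIdx]
    rw [Dωt12 t x 0 k, Dωx12 t x 0 k]
    rw [hex, hωx t x, het t x, hωt t x]
    simp only [blk11, blk12, blk21, blk22, Matrix.smul_apply, smul_eq_mul,
      Matrix.one_apply, Matrix.zero_apply, Pi.zero_apply, dotv, cvec, outer,
      Matrix.of_apply, mul_zero, zero_mul, mul_one, one_mul, neg_zero, neg_neg,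
      Finset.sum_const_zero, add_zero, zero_add, mul_neg, neg_mul, mul_ite, ite_mul,
      Finset.sum_ite_eq', Finset.sum_ite_eq, Finset.mem_univ, if_true,
      Finset.sum_neg_distrib, neg_zero, hΘdef, hθdef, Matrix.sub_apply]
    simp only [dotv, cvec, outer, Matrix.of_apply, Matrix.sub_apply, mul_sub, sub_mul,
      Finset.sum_sub_distrib, Finset.sum_add_distrib]
    have h1 : (∑ x_1, v t x x_1 * (starRingEnd ℂ (v t x x_1) * dxV v t x k))
        = (∑ l, v t x l * starRingEnd ℂ (v t x l)) * dxV v t x k :=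
      calc (∑ x_1, v t x x_1 * (starRingEnd ℂ (v t x x_1) * dxV v t x k))
          = ∑ x_1, (v t x x_1 * starRingEnd ℂ (v t x x_1)) * dxV v t x k :=
            Finset.sum_congr rfl fun l _ => by ring
        _ = _ := (Finset.sum_mul _ _ _).symm
    have h2 : (∑ x_1, v t x x_1 * (starRingEnd ℂ (dxV v t x x_1) * v t x k))
        = (∑ l, v t x l * starRingEnd ℂ (dxV v t x l)) * v t x k :=
      calc (∑ x_1, v t x x_1 * (starRingEnd ℂ (dxV v t x x_1) * v t x k))
          = ∑ x_1, (v t x x_1 * starRingEnd ℂ (dxV v t x x_1)) * v t x k :=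
            Finset.sum_congr rfl fun l _ => by ring
        _ = _ := (Finset.sum_mul _ _ _).symm
    have h3 : (∑ x_1, starRingEnd ℂ (dxV v t x x_1) * v t x x_1)
        = ∑ l, v t x l * starRingEnd ℂ (dxV v t x l) :=
      Finset.sum_congr rfl fun l _ => by ring
    have h4 : (∑ x_1, starRingEnd ℂ (v t x x_1) * dxV v t x x_1)
        = ∑ l, dxV v t x l * starRingEnd ℂ (v t x l) :=
      Finset.sum_congr rfl fun l _ => by ring
    rw [h1, h2, h3, h4]
    field_simp
    linear_combination ((1 + (n:ℂ)) * (-((κ:ℂ)^2 * dxV v t x k)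
      + ((∑ l, v t x l * starRingEnd ℂ (dxV v t x l))
        - ∑ l, dxV v t x l * starRingEnd ℂ (v t x l)) * v t x k)) * Complex.I_sq
  constructor
  · rintro ⟨-, h2⟩ t x k
    have hadd : (dxM ωt t x - dtM ωx t x + (ωx t x * ωt t x - ωt t x * ωx t x)
        + (ex * et t x - et t x * ex)) = 0 := by
      rw [h2 t x]; exact neg_add_cancel _
    have h0 := key t x k
    rw [hadd] at h0
    simp only [Matrix.zero_apply] at h0
    exact (sub_eq_zero.mp h0.symm).symm
  · intro hmk
    refine ⟨torsion, fun t x => ?_⟩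
    ext a b
    match a, b with
    | Sum.inl i, Sum.inr k =>
      obtain rfl : i = 0 := Subsingleton.elim i 0
      have h0 := key t x k
      rw [← hmk t x k] at h0
      simp only [sub_self] at h0
      simp only [Matrix.add_apply] at h0
      simp only [Matrix.neg_apply]
      exact eq_neg_of_add_eq_zero_left h0
    | Sum.inl i, Sum.inl i' =>
      simp only [Matrix.sub_apply, Matrix.add_apply, Matrix.neg_apply, dxM, dtM,
        Matrix.of_apply, mulIdx]
      rw [Dωt11 t x i i', Dωx11 t x i i']
      rw [hex, hωx t x, het t x, hωt t x]
      simp only [blk11, blk12, blk21, blk22, Matrix.smul_apply, smul_eq_mul,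
        Matrix.one_apply, Matrix.zero_apply, Pi.zero_apply, dotv, cvec, outer,
        Matrix.of_apply, mul_zero, zero_mul, mul_one, one_mul, neg_zero, neg_neg,
        Finset.sum_const_zero, add_zero, zero_add, mul_neg, neg_mul, mul_ite, ite_mul,
        Finset.sum_ite_eq', Finset.sum_ite_eq, Finset.mem_univ, if_true,
        Finset.sum_neg_distrib, hϖdef]
      simp only [dotv, cvec, _root_.map_add, _root_.map_mul, map_sum, Complex.conj_conj,
        map_ofNat, mul_add, add_mul, Finset.sum_add_distrib, Finset.sum_sub_distrib]
      have hRR : (∑ l, starRingEnd ℂ (v t x l) * v t x l)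
          = ∑ l, v t x l * starRingEnd ℂ (v t x l) :=
        Finset.sum_congr rfl fun l _ => by ring
      simp only [hRR]
      have q1 : (∑ x_1, v t x x_1 * starRingEnd ℂ (deriv (fun y => dxV v t y x_1) x))
          = ∑ l, starRingEnd ℂ (deriv (fun z => dxV v t z l) x) * v t x l :=
        Finset.sum_congr rfl fun l _ => by ring
      have q2 : (∑ x_1, deriv (fun y => dxV v t y x_1) x * starRingEnd ℂ (v t x x_1))
          = ∑ l, starRingEnd ℂ (v t x l) * deriv (fun z => dxV v t z l) x :=
        Finset.sum_congr rfl fun l _ => by ring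
      have q3 : (∑ x_1, v t x x_1 * ((2 * ∑ x_2, v t x x_2 * starRingEnd ℂ (v t x x_2))
            * starRingEnd ℂ (v t x x_1)))
          = (2 * ∑ l, v t x l * starRingEnd ℂ (v t x l))
            * ∑ l, v t x l * starRingEnd ℂ (v t x l) :=
        calc (∑ x_1, v t x x_1 * ((2 * ∑ x_2, v t x x_2 * starRingEnd ℂ (v t x x_2))
              * starRingEnd ℂ (v t x x_1)))
            = ∑ x_1, (2 * ∑ x_2, v t x x_2 * starRingEnd ℂ (v t x x_2))
              * (v t x x_1 * starRingEnd ℂ (v t x x_1)) :=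
              Finset.sum_congr rfl fun l _ => by ring
          _ = _ := (Finset.mul_sum _ _ _).symm
      have q4 : (∑ x_1, (2 * ∑ x_2, v t x x_2 * starRingEnd ℂ (v t x x_2)) * v t x x_1
            * starRingEnd ℂ (v t x x_1))
          = (2 * ∑ l, v t x l * starRingEnd ℂ (v t x l))
            * ∑ l, v t x l * starRingEnd ℂ (v t x l) :=
        calc (∑ x_1, (2 * ∑ x_2, v t x x_2 * starRingEnd ℂ (v t x x_2)) * v t x x_1
              * starRingEnd ℂ (v t x x_1))
            = ∑ x_1, (2 * ∑ x_2, v t x x_2 * starRingEnd ℂ (v t x x_2))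
              * (v t x x_1 * starRingEnd ℂ (v t x x_1)) :=
              Finset.sum_congr rfl fun l _ => by ring
          _ = _ := (Finset.mul_sum _ _ _).symm
      rw [q1, q2, q3, q4]
      field_simp
      linear_combination ((1 + (n:ℂ)) *
        ((∑ l, starRingEnd ℂ (v t x l) * deriv (fun z => dxV v t z l) x)
        - ∑ l, starRingEnd ℂ (deriv (fun z => dxV v t z l) x) * v t x l)) * Complex.I_sq
    | Sum.inr j, Sum.inl i =>
      simp only [Matrix.sub_apply, Matrix.add_apply, Matrix.neg_apply, dxM, dtM,
        Matrix.of_apply, mulIdx]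
      rw [Dωt21 t x j i, Dωx21 t x j i]
      rw [hmk t x j]
      rw [hex, hωx t x, het t x, hωt t x]
      simp only [blk11, blk12, blk21, blk22, Matrix.smul_apply, smul_eq_mul,
        Matrix.one_apply, Matrix.zero_apply, Pi.zero_apply, dotv, cvec, outer,
        Matrix.of_apply, mul_zero, zero_mul, mul_one, one_mul, neg_zero, neg_neg,
        Finset.sum_const_zero, add_zero, zero_add, mul_neg, neg_mul, mul_ite, ite_mul,
        Finset.sum_ite_eq', Finset.sum_ite_eq, Finset.mem_univ, if_true,
        Finset.sum_neg_distrib, hΘdef, hθdef, hϖdef]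
      simp only [dotv, cvec, outer, Matrix.of_apply, Matrix.sub_apply,
        _root_.map_add, _root_.map_mul, map_sum, map_pow, Complex.conj_conj,
        Complex.conj_I, Complex.conj_ofReal, map_ofNat, mul_add, add_mul, mul_sub, sub_mul,
        Finset.sum_add_distrib, Finset.sum_sub_distrib, mul_neg, neg_mul,
        Finset.sum_neg_distrib]
      have r1 : (∑ x_1, starRingEnd ℂ (v t x j) * dxV v t x x_1 * starRingEnd ℂ (v t x x_1))
          = starRingEnd ℂ (v t x j) * ∑ l, starRingEnd ℂ (v t x l) * dxV v t x l :=
        calc (∑ x_1, starRingEnd ℂ (v t x j) * dxV v t x x_1 * starRingEnd ℂ (v t x x_1))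
            = ∑ x_1, starRingEnd ℂ (v t x j)
              * (starRingEnd ℂ (v t x x_1) * dxV v t x x_1) :=
              Finset.sum_congr rfl fun l _ => by ring
          _ = _ := (Finset.mul_sum _ _ _).symm
      have r2 : (∑ x_1, starRingEnd ℂ (dxV v t x j) * v t x x_1 * starRingEnd ℂ (v t x x_1))
          = starRingEnd ℂ (dxV v t x j) * ∑ l, starRingEnd ℂ (v t x l) * v t x l :=
        calc (∑ x_1, starRingEnd ℂ (dxV v t x j) * v t x x_1 * starRingEnd ℂ (v t x x_1))
            = ∑ x_1, starRingEnd ℂ (dxV v t x j)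
              * (starRingEnd ℂ (v t x x_1) * v t x x_1) :=
              Finset.sum_congr rfl fun l _ => by ring
          _ = _ := (Finset.mul_sum _ _ _).symm
      rw [r1, r2]
      field_simp
      linear_combination ((1 + (n:ℂ)) * (((∑ l, starRingEnd ℂ (dxV v t x l) * v t x l)
          - ∑ l, starRingEnd ℂ (v t x l) * dxV v t x l) * starRingEnd ℂ (v t x j)
        + (κ:ℂ)^2 * starRingEnd ℂ (dxV v t x j))) * Complex.I_sq
    | Sum.inr j, Sum.inr k =>
      simp only [Matrix.sub_apply, Matrix.add_apply, Matrix.neg_apply, dxM, dtM,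
        Matrix.of_apply, mulIdx]
      rw [Dωt22 t x j k, Dωx22 t x j k]
      rw [hex, hωx t x, het t x, hωt t x]
      simp only [blk11, blk12, blk21, blk22, Matrix.smul_apply, smul_eq_mul,
        Matrix.one_apply, Matrix.zero_apply, Pi.zero_apply, dotv, cvec, outer,
        Matrix.of_apply, mul_zero, zero_mul, mul_one, one_mul, neg_zero, neg_neg,
        Finset.sum_const_zero, add_zero, zero_add, mul_neg, neg_mul, mul_ite, ite_mul,
        Finset.sum_ite_eq', Finset.sum_ite_eq, Finset.mem_univ, if_true,
        Finset.sum_neg_distrib, hϖdef]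
      simp only [dotv, cvec, _root_.map_add, _root_.map_mul, map_sum, Complex.conj_conj,
        map_ofNat]
      have hRR : (∑ l, starRingEnd ℂ (v t x l) * v t x l)
          = ∑ l, v t x l * starRingEnd ℂ (v t x l) :=
        Finset.sum_congr rfl fun l _ => by ring
      rw [hRR]
      ring
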